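/- arXiv:2202.05341 — 7 statements merged into one kernel-verified Lean document; each statement's English description precedes it below -/
import Mathlib

section
/- Let T be a semifield with an action of a finite group G by semiring automorphisms, and let S = T^G be the G-invariant subsemifield. If for every subgroup H of G there exists an element a ∈ T whose stabilizer subgroup G_a equals H, then the action of G on T is Galois for T/S; i.e., any two subgroups H₁, H₂ of G with T^{H₁} = T^{H₂} are equal. -/
/-- A finite group action on a semifield `T` (by semiring automorphisms) is Galois for the
extension `T / S`: the fixed subsemifield is `S`, and subgroups with equal fixed subsemifields
are equal. -/
def IsGaloisSemifieldAction (G T : Type*) [Group G] [Semifield T] [MulSemiringAction G T]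
    (S : Set T) : Prop :=
  MulAction.fixedPoints G T = S ∧
  ∀ H₁ H₂ : Subgroup G, MulAction.fixedPoints H₁ T = MulAction.fixedPoints H₂ T → H₁ = H₂

theorem stmt_0 (G T : Type*) [Group G] [Finite G] [Semifield T] [MulSemiringAction G T]
    (S : Set T) (hS : S = MulAction.fixedPoints G T)
    (hstab : ∀ H : Subgroup G, ∃ a : T, MulAction.stabilizer G a = H) :
    IsGaloisSemifieldAction G T S := by
  constructor
  · exact hS.symm
  · have key : ∀ H₁ H₂ : Subgroup G,
        MulAction.fixedPoints H₁ T = MulAction.fixedPoints H₂ T → H₂ ≤ H₁ := by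
      intro H₁ H₂ h g hg
      obtain ⟨a, ha⟩ := hstab H₁
      have haf : a ∈ MulAction.fixedPoints H₂ T := by
        rw [← h]
        intro x
        have : (x : G) ∈ MulAction.stabilizer G a := ha.symm ▸ x.2
        exact this
      have : (⟨g, hg⟩ : H₂) • a = a := haf ⟨g, hg⟩
      have : g ∈ MulAction.stabilizer G a := this
      rwa [ha] at this
    intro H₁ H₂ h
    exact le_antisymm (key H₂ H₁ h.symm) (key H₁ H₂ h)
end

section
/- Let S be an additively idempotent semiring that is totally ordered with respect to its natural partial order (x ≥ y iff x + y = x), and let φ be a semiring automorphism of S. Then either φ is the identity map of S, or φ has infinite order in the automorphism group of S. -/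
theorem stmt_1 (S : Type*) [CommSemiring S]
    (hidem : ∀ x : S, x + x = x)
    (htot : ∀ x y : S, x + y = x ∨ x + y = y)
    (φ : RingAut S) :
    φ = 1 ∨ ¬ IsOfFinOrder φ := by
  by_contra hc
  push_neg at hc
  obtain ⟨hne, hfin⟩ := hc
  obtain ⟨n, hn, hpow⟩ := isOfFinOrder_iff_pow_eq_one.mp hfin
  apply hne
  have key : ∀ ψ : RingAut S, ψ ^ n = 1 → ∀ x : S, x + ψ x = ψ x → ψ x = x := by
    intro ψ hψ x hx
    have step : ∀ y : S, y + ψ y = ψ y → ∀ k : ℕ, y + (ψ ^ k) y = (ψ ^ k) y := by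
      intro y hy k
      induction k with
      | zero => simpa using hidem y
      | succ k ih =>
        have h1 : ψ y + (ψ ^ (k + 1)) y = (ψ ^ (k + 1)) y := by
          have h2 := congrArg ψ ih
          rw [map_add] at h2
          have h3 : ψ ((ψ ^ k) y) = (ψ ^ (k + 1)) y := by
            rw [pow_succ']
            rfl
          rwa [h3] at h2
        calc y + (ψ ^ (k + 1)) y = y + (ψ y + (ψ ^ (k + 1)) y) := by rw [h1]
          _ = (y + ψ y) + (ψ ^ (k + 1)) y := (add_assoc _ _ _).symm
          _ = ψ y + (ψ ^ (k + 1)) y := by rw [hy]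
          _ = _ := h1
    have h2 : ψ x + x = x := by
      have hstep := step (ψ x) (by
        have := congrArg ψ hx
        rwa [map_add] at this) (n - 1)
      have hk : (ψ ^ (n - 1)) (ψ x) = x := by
        have h4 : (ψ ^ (n - 1)) (ψ x) = (ψ ^ n) x := by
          rw [show (ψ ^ (n - 1)) (ψ x) = (ψ ^ (n - 1) * ψ) x from rfl, ← pow_succ,
            Nat.sub_add_cancel hn]
        rw [h4, hψ]
        rfl
      rwa [hk] at hstep
    calc ψ x = x + ψ x := hx.symm
      _ = ψ x + x := add_comm _ _
      _ = x := h2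
  ext x
  show φ x = x
  rcases htot x (φ x) with h | h
  · have hx' : x + φ⁻¹ x = φ⁻¹ x := by
      have h5 : φ x + x = x := by rw [add_comm]; exact h
      have := congrArg (⇑φ⁻¹) h5
      rw [map_add] at this
      have h6 : φ⁻¹ (φ x) = x := φ.symm_apply_apply x
      rwa [h6] at this
    have h7 := key φ⁻¹ (by rw [inv_pow, hpow, inv_one]) x hx'
    have := congrArg (⇑φ) h7
    have h8 : φ (φ⁻¹ x) = x := φ.apply_symm_apply x
    rw [h7] at h8
    exact h8
  · exact key φ hpow x h
end

section
/- Let T be an additively idempotent semifield that is totally ordered with respect to its natural partial order, let T/S be a semifield extension, and let G be a finite group acting on T by semiring automorphisms such that the action is Galois for T/S. Then G is the trivial group and T = S. -/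
/-- `M` is a subsemifield of the semifield `T`. -/
def IsSubsemifield {T : Type*} [Semifield T] (M : Set T) : Prop :=
  (0 : T) ∈ M ∧ (1 : T) ∈ M ∧ (∀ a ∈ M, ∀ b ∈ M, a + b ∈ M) ∧
    (∀ a ∈ M, ∀ b ∈ M, a * b ∈ M) ∧ ∀ a ∈ M, a⁻¹ ∈ M

theorem stmt_2 (G T : Type*) [Group G] [Finite G] [Semifield T] [MulSemiringAction G T]
    (hidem : ∀ x : T, x + x = x)
    (htot : ∀ x y : T, x + y = x ∨ x + y = y)
    (S : Set T) (hS : IsSubsemifield S)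
    (hGal : IsGaloisSemifieldAction G T S) :
    Subsingleton G ∧ S = Set.univ := by
  -- key: if x ≤ g • x (in the natural order) then g • x = x
  have key : ∀ (g : G) (x : T), x + g • x = g • x → g • x = x := by
    intro g x hle
    have hchain : ∀ k : ℕ, g • x + g ^ (k + 1) • x = g ^ (k + 1) • x := by
      intro k
      induction k with
      | zero => simpa using hidem (g • x)
      | succ k ih =>
        have h2 : g ^ (k + 1) • x + g ^ (k + 2) • x = g ^ (k + 2) • x := by
          have := congrArg (fun t => g ^ (k + 1) • t) hle
          simp only [smul_add, smul_smul] at this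
          have hp : g ^ (k + 1) * g = g ^ (k + 2) := (pow_succ g (k + 1)).symm
          rwa [hp] at this
        calc g • x + g ^ (k + 2) • x
            = g • x + (g ^ (k + 1) • x + g ^ (k + 2) • x) := by rw [h2]
          _ = (g • x + g ^ (k + 1) • x) + g ^ (k + 2) • x := by rw [add_assoc]
          _ = g ^ (k + 1) • x + g ^ (k + 2) • x := by rw [ih]
          _ = g ^ (k + 2) • x := h2
    obtain ⟨k, hk⟩ := Nat.exists_eq_succ_of_ne_zero (orderOf_pos g).ne'
    rw [Nat.succ_eq_add_one] at hk
    have hxx := hchain k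
    rw [← hk, pow_orderOf_eq_one, one_smul] at hxx
    -- hxx : g • x + x = x
    exact hle.symm.trans ((add_comm _ _).trans hxx)
  -- hence the action is trivial
  have triv : ∀ (g : G) (x : T), g • x = x := by
    intro g x
    rcases htot x (g • x) with h | h
    · -- x + g • x = x : apply key to g⁻¹ and g • x
      have h' : (g • x) + g⁻¹ • (g • x) = g⁻¹ • (g • x) := by
        rw [inv_smul_smul, add_comm]; exact h
      have := key g⁻¹ (g • x) h'
      rw [inv_smul_smul] at this
      exact this.symm
    · exact key g x h
  have hfix : ∀ H : Subgroup G, MulAction.fixedPoints H T = Set.univ := by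
    intro H
    ext x
    simp only [MulAction.mem_fixedPoints, Set.mem_univ, iff_true]
    intro h
    exact triv (h : G) x
  have htop : (⊤ : Subgroup G) = ⊥ := hGal.2 ⊤ ⊥ (by rw [hfix, hfix])
  constructor
  · constructor
    intro a b
    have ha : a ∈ (⊥ : Subgroup G) := htop ▸ Subgroup.mem_top a
    have hb : b ∈ (⊥ : Subgroup G) := htop ▸ Subgroup.mem_top b
    rw [Subgroup.mem_bot] at ha hb
    rw [ha, hb]
  · rw [← hGal.1]
    ext x
    simp only [MulAction.mem_fixedPoints, Set.mem_univ, iff_true]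
    intro g
    exact triv g x
end

section
/- Let T/S be a semifield extension and G a finite group acting on T by semiring automorphisms, with the action Galois for T/S. Let A be the set of intermediate semifields M of T/S with M = T^{G_M}, and B the set of all subgroups of G. Then Φ : A → B, M ↦ G_M, and Ψ : B → A, H ↦ T^H, are mutually inverse inclusion-reversing bijections. Moreover, for every M ∈ A, the induced action of G_M on T is Galois for T/M. -/
lemma aux_smul_inv {G T : Type*} [Group G] [Semifield T] [MulSemiringAction G T]
    (g : G) (a : T) : g • a⁻¹ = (g • a)⁻¹ := by
  rcases eq_or_ne a 0 with rfl | h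
  · simp
  · have : g • a⁻¹ * g • a = 1 := by
      rw [← smul_mul', inv_mul_cancel₀ h, smul_one]
    exact eq_inv_of_mul_eq_one_left this

lemma aux_sub {G T : Type*} [Group G] [Semifield T] [MulSemiringAction G T]
    (H : Subgroup G) : IsSubsemifield (MulAction.fixedPoints H T) := by
  refine ⟨fun h => smul_zero _, fun h => smul_one _, ?_, ?_, ?_⟩
  · intro a ha b hb h
    rw [smul_add, ha h, hb h]
  · intro a ha b hb h
    rw [smul_mul', ha h, hb h]
  · intro a ha h
    rw [show (h • a⁻¹ : T) = ((h : G) • a)⁻¹ from aux_smul_inv _ _]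
    exact congrArg Inv.inv (ha h)

lemma aux_fixing {G T : Type*} [Group G] [Semifield T] [MulSemiringAction G T]
    {S : Set T} (hGal : IsGaloisSemifieldAction G T S) (H : Subgroup G) :
    fixingSubgroup G (MulAction.fixedPoints H T) = H := by
  apply hGal.2
  apply Set.Subset.antisymm
  · intro x hx ⟨h, hh⟩
    exact hx ⟨h, (mem_fixingSubgroup_iff G).mpr
      (fun y hy => MulAction.mem_fixedPoints.mp hy ⟨h, hh⟩)⟩
  · intro x hx ⟨g, hg⟩
    exact (mem_fixingSubgroup_iff G).mp hg x hx

theorem stmt_4 (G T : Type*) [Group G] [Finite G] [Semifield T] [MulSemiringAction G T]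
    (S : Set T) (hGal : IsGaloisSemifieldAction G T S)
    (A : Set (Set T))
    (hA : A = {M | IsSubsemifield M ∧ S ⊆ M ∧
      M = MulAction.fixedPoints (fixingSubgroup G M) T}) :
    (∀ H : Subgroup G, MulAction.fixedPoints H T ∈ A) ∧
    (∀ M ∈ A, MulAction.fixedPoints (fixingSubgroup G M) T = M) ∧
    (∀ H : Subgroup G, fixingSubgroup G (MulAction.fixedPoints H T) = H) ∧
    (∀ M₁ ∈ A, ∀ M₂ ∈ A, M₁ ⊆ M₂ → fixingSubgroup G M₂ ≤ fixingSubgroup G M₁) ∧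
    (∀ H₁ H₂ : Subgroup G, H₁ ≤ H₂ →
      MulAction.fixedPoints H₂ T ⊆ MulAction.fixedPoints H₁ T) ∧
    (∀ M ∈ A, MulAction.fixedPoints (fixingSubgroup G M) T = M ∧
      ∀ K₁ K₂ : Subgroup (fixingSubgroup G M),
        MulAction.fixedPoints K₁ T = MulAction.fixedPoints K₂ T → K₁ = K₂) := by
  have hS : S ⊆ MulAction.fixedPoints (⊥ : Subgroup G) T := by
    intro x hx ⟨g, hg⟩
    rw [← hGal.1] at hx
    exact hx g
  have hSH : ∀ H : Subgroup G, S ⊆ MulAction.fixedPoints H T := by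
    intro H x hx ⟨g, hg⟩
    rw [← hGal.1] at hx
    exact hx g
  have hmem : ∀ H : Subgroup G, MulAction.fixedPoints H T ∈ A := by
    intro H
    rw [hA]
    exact ⟨aux_sub H, hSH H, by rw [aux_fixing hGal H]⟩
  have hMA : ∀ M ∈ A, MulAction.fixedPoints (fixingSubgroup G M) T = M := by
    intro M hM
    rw [hA] at hM
    exact hM.2.2.symm
  refine ⟨hmem, hMA, aux_fixing hGal, ?_, ?_, ?_⟩
  · intro M₁ _ M₂ _ h g hg
    rw [mem_fixingSubgroup_iff] at *
    exact fun y hy => hg y (h hy)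
  · intro H₁ H₂ h x hx ⟨g, hg⟩
    exact hx ⟨g, h hg⟩
  · intro M hM
    refine ⟨hMA M hM, ?_⟩
    intro K₁ K₂ hK
    have key : ∀ K : Subgroup (fixingSubgroup G M),
        MulAction.fixedPoints K T =
          MulAction.fixedPoints (K.map (fixingSubgroup G M).subtype) T := by
      intro K
      ext x
      constructor
      · rintro hx ⟨g, hg⟩
        rw [Subgroup.mem_map] at hg
        obtain ⟨k, hk, rfl⟩ := hg
        exact hx ⟨k, hk⟩
      · intro hx ⟨k, hk⟩
        exact hx ⟨(k : fixingSubgroup G M), Subgroup.mem_map.mpr ⟨k, hk, rfl⟩⟩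
    have := hGal.2 _ _ ((key K₁).symm.trans (hK.trans (key K₂)))
    exact Subgroup.map_injective (fixingSubgroup G M).subtype_injective this
end

section
/- Let T/S be a semifield extension, G a finite group acting on T by semiring automorphisms, and M an intermediate semifield with M = T^{G_M}. Then G_M is a normal subgroup of G if and only if g(M) ⊆ M for every g ∈ G. -/
theorem stmt_7 (G T : Type*) [Group G] [Finite G] [Semifield T] [MulSemiringAction G T]
    (S M : Set T) (hS : IsSubsemifield S) (hM : IsSubsemifield M) (hSM : S ⊆ M)
    (hfix : M = MulAction.fixedPoints (fixingSubgroup G M) T) :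
    (fixingSubgroup G M).Normal ↔ ∀ g : G, ∀ m ∈ M, g • m ∈ M := by
  constructor
  · intro hN g m hm
    rw [hfix, MulAction.mem_fixedPoints]
    rintro ⟨n, hn⟩
    have hn' : g⁻¹ * n * g ∈ fixingSubgroup G M := hN.conj_mem' n hn g
    have := (mem_fixingSubgroup_iff G).mp hn' m hm
    calc (⟨n, hn⟩ : fixingSubgroup G M) • g • m = n • g • m := rfl
      _ = g • (g⁻¹ * n * g) • m := by
          rw [smul_smul, smul_smul]; group
      _ = g • m := by rw [this]
  · intro hmem
    constructor
    intro n hn g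
    rw [mem_fixingSubgroup_iff] at hn ⊢
    intro m hm
    have h1 : g⁻¹ • m ∈ M := hmem g⁻¹ m hm
    calc (g * n * g⁻¹) • m = g • n • g⁻¹ • m := by rw [smul_smul, smul_smul]
      _ = g • g⁻¹ • m := by rw [hn _ h1]
      _ = m := by rw [smul_inv_smul]
end

section
/- Let T/S be a semifield extension, G a finite group acting on T with the action Galois for T/S, and M an intermediate semifield with M = T^{G_M} and g(M) = M for all g ∈ G. Let φ : G → Aut(M/S) be the restriction homomorphism g ↦ g|_M and H = Im(φ). Then the action of H on M is Galois for M/S, and H is isomorphic to the quotient group G/G_M. -/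
/-- The restriction homomorphism `φ : G → Aut(M)`, `g ↦ g|_M`, for a `G`-stable
subsemiring `M` of `T`. -/
def restrictHom {G T : Type*} [Group G] [Semifield T] [MulSemiringAction G T]
    (M : Subsemiring T) (hgM : ∀ g : G, ∀ t ∈ M, g • t ∈ M) : G →* RingAut ↥M where
  toFun g :=
    { toFun := fun m => ⟨g • (m : T), hgM g m m.2⟩
      invFun := fun m => ⟨g⁻¹ • (m : T), hgM g⁻¹ m m.2⟩
      left_inv := fun m => Subtype.ext (by simp)
      right_inv := fun m => Subtype.ext (by simp)
      map_add' := fun a b => Subtype.ext (by simp [smul_add])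
      map_mul' := fun a b => Subtype.ext (by simp [smul_mul']) }
  map_one' := RingEquiv.ext fun m => Subtype.ext (one_smul G (m : T))
  map_mul' g₁ g₂ := RingEquiv.ext fun m => Subtype.ext (mul_smul g₁ g₂ (m : T))

theorem stmt_10 (G T : Type*) [Group G] [Finite G] [Semifield T] [MulSemiringAction G T]
    (S : Set T) (hS : IsSubsemifield S)
    (M : Subsemiring T) (hMinv : ∀ a ∈ M, a⁻¹ ∈ M) (hSM : S ⊆ M)
    (hGal : IsGaloisSemifieldAction G T S)
    (hfix : (M : Set T) = MulAction.fixedPoints (fixingSubgroup G (M : Set T)) T)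
    (hgM : ∀ g : G, ∀ t ∈ M, g • t ∈ M) :
    -- every element of `H = Im φ` fixes `S` pointwise, i.e. `H ≤ Aut(M/S)`
    (∀ f ∈ (restrictHom M hgM).range, ∀ x : ↥M, (x : T) ∈ S → f x = x) ∧
    -- the action of `H` on `M` is Galois for `M / S` : `M^H = S` ...
    {m : ↥M | ∀ f ∈ (restrictHom M hgM).range, f m = m} = {m : ↥M | (m : T) ∈ S} ∧
    -- ... and subgroups of `H` with equal fixed subsemifields coincide
    (∀ K₁ K₂ : Subgroup (RingAut ↥M),
      K₁ ≤ (restrictHom M hgM).range → K₂ ≤ (restrictHom M hgM).range →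
      {m : ↥M | ∀ f ∈ K₁, f m = m} = {m : ↥M | ∀ f ∈ K₂, f m = m} → K₁ = K₂) ∧
    -- the kernel of `φ` is `G_M`, and `H = Im φ ≅ G / ker φ = G / G_M`
    (restrictHom M hgM).ker = fixingSubgroup G (M : Set T) ∧
    Nonempty (↥(restrictHom M hgM).range ≃* G ⧸ (restrictHom M hgM).ker) := by
  set φ := restrictHom M hgM with hφ
  have happ : ∀ (g : G) (m : ↥M), (φ g m : T) = g • (m : T) := fun g m => rfl
  -- kernel = fixing subgroup
  have hker : φ.ker = fixingSubgroup G (M : Set T) := by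
    ext g
    simp only [MonoidHom.mem_ker, mem_fixingSubgroup_iff]
    constructor
    · intro h t ht
      have := congrArg (fun f : RingAut ↥M => (f ⟨t, ht⟩ : T)) h
      simpa [happ] using this
    · intro h
      apply RingEquiv.ext
      intro m
      exact Subtype.ext (h m m.2)
  have hSfix : MulAction.fixedPoints G T = S := hGal.1
  -- part 1
  have part1 : ∀ f ∈ φ.range, ∀ x : ↥M, (x : T) ∈ S → f x = x := by
    rintro f ⟨g, rfl⟩ x hx
    apply Subtype.ext
    rw [happ]
    rw [← hSfix] at hx
    exact hx g
  -- part 2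
  have part2 : {m : ↥M | ∀ f ∈ φ.range, f m = m} = {m : ↥M | (m : T) ∈ S} := by
    ext m
    simp only [Set.mem_setOf_eq]
    constructor
    · intro h
      rw [← hSfix]
      intro g
      have := h (φ g) ⟨g, rfl⟩
      exact congrArg Subtype.val this
    · intro h f hf
      exact part1 f hf m h
  refine ⟨part1, part2, ?_, hker, ⟨(QuotientGroup.quotientKerEquivRange φ).symm⟩⟩
  -- part 3
  intro K₁ K₂ hK₁ hK₂ heq
  have aux : ∀ K : Subgroup (RingAut ↥M), K ≤ φ.range →
      MulAction.fixedPoints (K.comap φ) T = {t : T | ∃ ht : t ∈ M, ∀ f ∈ K, f ⟨t, ht⟩ = ⟨t, ht⟩} := by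
    intro K hK
    ext t
    constructor
    · intro hfp
      have htM : t ∈ (M : Set T) := by
        rw [hfix, ← hker]
        rintro ⟨g, hg⟩
        exact hfp ⟨g, Subgroup.mem_comap.mpr
          (by rw [MonoidHom.mem_ker.mp hg]; exact K.one_mem)⟩
      refine ⟨htM, ?_⟩
      rintro f hf
      obtain ⟨g, rfl⟩ := hK hf
      exact Subtype.ext (hfp ⟨g, Subgroup.mem_comap.mpr hf⟩)
    · rintro ⟨htM, hfixK⟩ ⟨g, hg⟩
      have := hfixK (φ g) (Subgroup.mem_comap.mp hg)
      exact congrArg Subtype.val this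
  have hfpeq : MulAction.fixedPoints (K₁.comap φ) T = MulAction.fixedPoints (K₂.comap φ) T := by
    rw [aux K₁ hK₁, aux K₂ hK₂]
    ext t
    constructor
    · rintro ⟨ht, h⟩
      refine ⟨ht, fun f hf => ?_⟩
      have : (⟨t, ht⟩ : ↥M) ∈ {m : ↥M | ∀ f ∈ K₂, f m = m} := by
        rw [← heq]; exact h
      exact this f hf
    · rintro ⟨ht, h⟩
      refine ⟨ht, fun f hf => ?_⟩
      have : (⟨t, ht⟩ : ↥M) ∈ {m : ↥M | ∀ f ∈ K₁, f m = m} := by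
        rw [heq]; exact h
      exact this f hf
  have := hGal.2 _ _ hfpeq
  calc K₁ = (K₁.comap φ).map φ := (Subgroup.map_comap_eq_self hK₁).symm
    _ = (K₂.comap φ).map φ := by rw [this]
    _ = K₂ := Subgroup.map_comap_eq_self hK₂
end

section
/- Let T/S be a semifield extension, G a finite group acting on T, and M an intermediate semifield with M = T^{G_M}. Suppose there exists a subgroup H' ≤ Aut(M/S) such that for every m ∈ M the orbits G·m and H'·m coincide (as subsets of T). Then g(M) ⊆ M for every g ∈ G, and consequently G_M is normal in G. -/
theorem stmt_11 (G T : Type*) [Group G] [Finite G] [Semifield T] [MulSemiringAction G T]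
    (S : Set T) (hS : IsSubsemifield S)
    (M : Subsemiring T) (hMinv : ∀ a ∈ M, a⁻¹ ∈ M) (hSM : S ⊆ M)
    (hfix : (M : Set T) = MulAction.fixedPoints (fixingSubgroup G (M : Set T)) T)
    -- `H'` is a subgroup of `Aut(M/S)` ...
    (H' : Subgroup (RingAut ↥M)) (hH'S : ∀ h ∈ H', ∀ x : ↥M, (x : T) ∈ S → h x = x)
    -- ... whose orbits on `M` coincide with the `G`-orbits
    (horb : ∀ m : ↥M, {x : T | ∃ g : G, x = g • (m : T)} =
      {x : T | ∃ h ∈ H', x = ((h m : ↥M) : T)}) :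
    (∀ g : G, ∀ t ∈ M, g • t ∈ M) ∧ (fixingSubgroup G (M : Set T)).Normal := by
  have key : ∀ g : G, ∀ t ∈ M, g • t ∈ M := by
    intro g t ht
    have : g • t ∈ {x : T | ∃ g' : G, x = g' • ((⟨t, ht⟩ : ↥M) : T)} := ⟨g, rfl⟩
    rw [horb ⟨t, ht⟩] at this
    obtain ⟨h, _, hx⟩ := this
    rw [hx]
    exact (h ⟨t, ht⟩).2
  refine ⟨key, ⟨?_⟩⟩
  intro n hn g
  rw [mem_fixingSubgroup_iff] at hn ⊢
  intro y hy
  have h1 : g⁻¹ • y ∈ M := key g⁻¹ y hy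
  calc (g * n * g⁻¹) • y = g • n • g⁻¹ • y := by rw [mul_smul, mul_smul]
    _ = g • g⁻¹ • y := by rw [hn _ h1]
    _ = y := by rw [smul_inv_smul]
end
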